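/- arXiv:1502.06832 — 10 statements merged into one kernel-verified Lean document; each statement's English description precedes it below -/
import Mathlib

section
/- Let r ≥ 2 and n > k ≥ r−1. For every hypergraph H in the family 𝒢(n,k,r), every k-set of vertices of {1,…,n} is covered in H. Consequently f(n,k,r) ≤ g(n,k,r). -/
open Finset

/-- `u` covers the set `A` in the `r`-uniform hypergraph `H`: `u ∉ A` and every set
`B ∪ {u}` with `B` an `(r-1)`-subset of `A` is an edge of `H`. -/
def Covers {n : ℕ} (r : ℕ) (H : Finset (Finset (Fin n))) (u : Fin n) (A : Finset (Fin n)) : Prop :=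
  u ∉ A ∧ ∀ B ⊆ A, B.card = r - 1 → insert u B ∈ H

/-- `A` is covered in `H` if some vertex covers it. -/
def CoveredIn {n : ℕ} (r : ℕ) (H : Finset (Finset (Fin n))) (A : Finset (Fin n)) : Prop :=
  ∃ u, Covers r H u A

/-- `H` is an `r`-uniform hypergraph. -/
def IsUniform {n : ℕ} (r : ℕ) (H : Finset (Finset (Fin n))) : Prop :=
  ∀ e ∈ H, e.card = r

/-- `H` is an `r`-uniform hypergraph on `[n]` in which every `k`-set of vertices is covered. -/
def CoversAllK (n k r : ℕ) (H : Finset (Finset (Fin n))) : Prop :=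
  IsUniform r H ∧ ∀ A : Finset (Fin n), A.card = k → CoveredIn r H A

/-- `f n k r`: the minimum number of edges in an `r`-uniform hypergraph on `[n]`
in which every `k`-set of vertices is covered. -/
noncomputable def f (n k r : ℕ) : ℕ :=
  sInf {m | ∃ H : Finset (Finset (Fin n)), CoversAllK n k r H ∧ H.card = m}

/-- `H` is an `r`-uniform hypergraph on `[n]` such that every `(r-1)`-set of vertices
is contained in some edge. -/
def CoversShadows (n r : ℕ) (H : Finset (Finset (Fin n))) : Prop :=
  IsUniform r H ∧ ∀ B : Finset (Fin n), B.card = r - 1 → ∃ e ∈ H, B ⊆ e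

/-- `D n r`: minimum number of edges of an `r`-uniform hypergraph on `[n]` covering
all `(r-1)`-sets. -/
noncomputable def D (n r : ℕ) : ℕ :=
  sInf {m | ∃ H : Finset (Finset (Fin n)), CoversShadows n r H ∧ H.card = m}

/-- `g n k r = C(n,r) - C(n-k+r-1,r) + D(n-k+r-1,r)`. -/
noncomputable def g (n k r : ℕ) : ℕ :=
  n.choose r - (n - k + r - 1).choose r + D (n - k + r - 1) r

/-- Membership in the extremal family `𝒢(n,k,r)`: all `r`-sets meeting the first
`k-r+1` vertices, together with `D(n-k+r-1,r)` `r`-sets on the remaining vertices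
whose shadow contains every `(r-1)`-set of the remaining vertices. -/
def InG (n k r : ℕ) (H : Finset (Finset (Fin n))) : Prop :=
  ∃ S : Finset (Finset (Fin n)),
    S.card = D (n - k + r - 1) r ∧
    (∀ e ∈ S, e.card = r ∧ ∀ v ∈ e, k - r + 1 ≤ (v : ℕ)) ∧
    (∀ B : Finset (Fin n), B.card = r - 1 → (∀ v ∈ B, k - r + 1 ≤ (v : ℕ)) →
      ∃ e ∈ S, B ⊆ e) ∧
    H = (Finset.univ.filter
          fun e : Finset (Fin n) => e.card = r ∧ ∃ v ∈ e, (v : ℕ) < k - r + 1) ∪ S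

/-- The degree of a vertex in a hypergraph. -/
def degreeH {n : ℕ} (H : Finset (Finset (Fin n))) (v : Fin n) : ℕ :=
  (H.filter fun e => v ∈ e).card

lemma card_smalls (n t : ℕ) (ht : t ≤ n) :
    (univ.filter fun v : Fin n => (v : ℕ) < t).card = t := by
  have h : (univ.filter fun v : Fin n => (v : ℕ) < t) =
      (Finset.range t).attachFin (fun m hm => lt_of_lt_of_le (mem_range.mp hm) ht) := by
    ext v
    simp [Finset.mem_attachFin]
  rw [h, card_attachFin, card_range]

lemma existsMinCover (m r : ℕ) (hrm : r ≤ m) :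
    ∃ H : Finset (Finset (Fin m)), CoversShadows m r H ∧ H.card = D m r := by
  have hne : {x | ∃ H : Finset (Finset (Fin m)), CoversShadows m r H ∧ H.card = x}.Nonempty := by
    refine ⟨_, Finset.univ.powersetCard r, ⟨fun e he => (Finset.mem_powersetCard.mp he).2, ?_⟩,
      rfl⟩
    intro B hB
    obtain ⟨e, hBe, _, hec⟩ := Finset.exists_subsuperset_card_eq (Finset.subset_univ B)
      (by omega : B.card ≤ r) (by simpa using hrm)
    exact ⟨e, Finset.mem_powersetCard.mpr ⟨Finset.subset_univ e, hec⟩, hBe⟩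
  exact Nat.sInf_mem hne

lemma part1 (n k r : ℕ) (hr : 2 ≤ r) (hk : r - 1 ≤ k) (hn : k < n) :
    ∀ H : Finset (Finset (Fin n)), InG n k r H →
      ∀ A : Finset (Fin n), A.card = k → CoveredIn r H A := by
  intro H hH A hA
  obtain ⟨S, hScard, hSmem, hScover, hHeq⟩ := hH
  set t := k - r + 1 with ht
  have htn : t ≤ n := by omega
  set smalls := univ.filter fun v : Fin n => (v : ℕ) < t with hsm
  have hsc : smalls.card = t := card_smalls n t htn
  by_cases h1 : smalls ⊆ A
  · by_cases h2 : ∃ B₀, B₀ ⊆ A ∧ B₀.card = r - 1 ∧ ∀ v ∈ B₀, t ≤ (v : ℕ)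
    · obtain ⟨B₀, hB₀A, hB₀c, hB₀l⟩ := h2
      obtain ⟨e, heS, hBe⟩ := hScover B₀ hB₀c hB₀l
      obtain ⟨hec, hel⟩ := hSmem e heS
      have hne : B₀ ≠ e := by intro h; rw [h, hec] at hB₀c; omega
      obtain ⟨u, hue, huB⟩ := Finset.exists_of_ssubset (hBe.ssubset_of_ne hne)
      have hd : smalls ⊆ A \ B₀ := by
        intro v hv
        have hvs : (v : ℕ) < t := (mem_filter.mp hv).2
        exact mem_sdiff.mpr ⟨h1 hv, fun hvB => absurd (hB₀l v hvB) (by omega)⟩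
      have hcard1 : (A \ B₀).card = k - (r - 1) := by rw [card_sdiff_of_subset hB₀A, hA, hB₀c]
      have heq : smalls = A \ B₀ := Finset.eq_of_subset_of_card_le hd (by omega)
      have hul : t ≤ (u : ℕ) := hel u hue
      have huA : u ∉ A := by
        intro h
        have : u ∈ smalls := by rw [heq]; exact mem_sdiff.mpr ⟨h, huB⟩
        exact absurd (mem_filter.mp this).2 (by omega)
      refine ⟨u, huA, fun B hBA hBc => ?_⟩
      by_cases hBl : ∀ v ∈ B, t ≤ (v : ℕ)
      · have hBB : B ⊆ B₀ := by
          intro v hv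
          have h3 : v ∈ A \ smalls := mem_sdiff.mpr ⟨hBA hv, fun hvs =>
            absurd (mem_filter.mp hvs).2 (by have := hBl v hv; omega)⟩
          rw [heq, Finset.sdiff_sdiff_self_left] at h3
          exact (mem_inter.mp h3).2
        have hBeq : B = B₀ := Finset.eq_of_subset_of_card_le hBB (by omega)
        have huB' : u ∉ B := fun h => huA (hBA h)
        have hins : insert u B = e := by
          apply Finset.eq_of_subset_of_card_le
          · exact Finset.insert_subset hue (hBeq ▸ hBe)
          · rw [card_insert_of_notMem huB', hBc, hec]; omega
        rw [hins, hHeq]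
        exact mem_union_right _ heS
      · push_neg at hBl
        obtain ⟨v, hvB, hvt⟩ := hBl
        rw [hHeq]
        apply mem_union_left
        have huB' : u ∉ B := fun h => huA (hBA h)
        refine mem_filter.mpr ⟨mem_univ _, ?_, ⟨v, mem_insert_of_mem hvB, hvt⟩⟩
        rw [card_insert_of_notMem huB', hBc]; omega
    · push_neg at h2
      have hAne : A ≠ univ := by
        intro h
        rw [h, card_univ, Fintype.card_fin] at hA
        omega
      obtain ⟨u, _, huA⟩ := Finset.exists_of_ssubset ((Finset.subset_univ A).ssubset_of_ne hAne)
      refine ⟨u, huA, fun B hBA hBc => ?_⟩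
      obtain ⟨v, hvB, hvt⟩ := h2 B hBA hBc
      rw [hHeq]
      apply mem_union_left
      have huB' : u ∉ B := fun h => huA (hBA h)
      refine mem_filter.mpr ⟨mem_univ _, ?_, ⟨v, mem_insert_of_mem hvB, hvt⟩⟩
      rw [card_insert_of_notMem huB', hBc]; omega
  · rw [Finset.not_subset] at h1
    obtain ⟨u, hus, huA⟩ := h1
    have hut : (u : ℕ) < t := (mem_filter.mp hus).2
    refine ⟨u, huA, fun B hBA hBc => ?_⟩
    rw [hHeq]
    apply mem_union_left
    have huB' : u ∉ B := fun h => huA (hBA h)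
    refine mem_filter.mpr ⟨mem_univ _, ?_, ⟨u, mem_insert_self _ _, hut⟩⟩
    rw [card_insert_of_notMem huB', hBc]; omega

lemma part2 (n k r : ℕ) (hr : 2 ≤ r) (hk : r - 1 ≤ k) (hn : k < n) :
    f n k r ≤ g n k r := by
  by_cases hkr : r ≤ k
  · set t := k - r + 1 with ht
    set m := n - k + r - 1 with hm
    have hmt : m + t = n := by omega
    have hrm : r ≤ m := by omega
    obtain ⟨H₀, ⟨hH₀u, hH₀c⟩, hH₀card⟩ := existsMinCover m r hrm
    let emb : Fin m → Fin n := fun i => ⟨(i : ℕ) + t, by omega⟩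
    have hembinj : Function.Injective emb := by
      intro a b hab
      have h := congrArg Fin.val hab
      simp only [emb] at h
      exact Fin.ext (by omega)
    set S : Finset (Finset (Fin n)) := H₀.image (fun e => e.image emb) with hS
    have hScard : S.card = D m r := by
      rw [hS, Finset.card_image_of_injective _ (Finset.image_injective hembinj), hH₀card]
    have hSmem : ∀ e ∈ S, e.card = r ∧ ∀ v ∈ e, t ≤ (v : ℕ) := by
      intro e he
      obtain ⟨e₀, he₀, rfl⟩ := Finset.mem_image.mp he
      refine ⟨by rw [Finset.card_image_of_injective _ hembinj]; exact hH₀u e₀ he₀, ?_⟩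
      intro v hv
      obtain ⟨i, _, rfl⟩ := Finset.mem_image.mp hv
      simp [emb]
    have hScover : ∀ B : Finset (Fin n), B.card = r - 1 → (∀ v ∈ B, t ≤ (v : ℕ)) →
        ∃ e ∈ S, B ⊆ e := by
      intro B hBc hBl
      have hm0 : 0 < m := by omega
      let d : Fin n → Fin m := fun v => ⟨(v : ℕ) - t, by have := v.isLt; omega⟩
      have hdinj : Set.InjOn d B := by
        intro a ha b hb hab
        have h := congrArg Fin.val hab
        simp only [d] at h
        have hat := hBl a ha
        have hbt := hBl b hb
        exact Fin.ext (by omega)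
      have hBdc : (B.image d).card = r - 1 := by
        rw [Finset.card_image_of_injOn hdinj, hBc]
      obtain ⟨e₀, he₀, hBe₀⟩ := hH₀c (B.image d) hBdc
      refine ⟨e₀.image emb, Finset.mem_image_of_mem _ he₀, fun v hv => ?_⟩
      have hveq : emb (d v) = v := by
        have := hBl v hv
        exact Fin.ext (by simp [emb, d]; omega)
      rw [← hveq]
      exact Finset.mem_image_of_mem emb (hBe₀ (Finset.mem_image_of_mem d hv))
    set F := (Finset.univ.filter
        fun e : Finset (Fin n) => e.card = r ∧ ∃ v ∈ e, (v : ℕ) < t) with hF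
    have hInG : InG n k r (F ∪ S) := ⟨S, hScard, hSmem, hScover, rfl⟩
    have hcov : CoversAllK n k r (F ∪ S) := by
      refine ⟨?_, part1 n k r hr hk hn (F ∪ S) hInG⟩
      intro e he
      rcases Finset.mem_union.mp he with h | h
      · exact (Finset.mem_filter.mp h).2.1
      · exact (hSmem e h).1
    have hdisj : Disjoint F S := by
      rw [Finset.disjoint_left]
      intro e heF heS
      obtain ⟨-, -, v, hv, hvt⟩ := Finset.mem_filter.mp heF
      exact absurd ((hSmem e heS).2 v hv) (by omega)
    have hlarge : (univ.filter fun v : Fin n => ¬(v : ℕ) < t).card = m := by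
      have h1 := card_smalls n t (by omega)
      have h2 := Finset.card_filter_add_card_filter_not
        (s := (univ : Finset (Fin n))) (p := fun v : Fin n => (v : ℕ) < t)
      rw [card_univ, Fintype.card_fin] at h2
      omega
    have hFcard : F.card = n.choose r - m.choose r := by
      set P := (univ : Finset (Fin n)).powersetCard r with hP
      have hPcard : P.card = n.choose r := by
        rw [hP, Finset.card_powersetCard, card_univ, Fintype.card_fin]
      have hFeq : F = P.filter fun e => ∃ v ∈ e, v.val < t := by
        ext e
        constructor
        · intro h
          obtain ⟨-, hc, hex⟩ := Finset.mem_filter.mp h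
          exact Finset.mem_filter.mpr
            ⟨Finset.mem_powersetCard.mpr ⟨Finset.subset_univ e, hc⟩, hex⟩
        · intro h
          obtain ⟨heP, hex⟩ := Finset.mem_filter.mp h
          exact Finset.mem_filter.mpr
            ⟨Finset.mem_univ _, (Finset.mem_powersetCard.mp heP).2, hex⟩
      have hPL : (P.filter fun e => ¬∃ v ∈ e, v.val < t) =
          (univ.filter fun v : Fin n => ¬(v : ℕ) < t).powersetCard r := by
        ext e
        constructor
        · intro h
          obtain ⟨heP, hne⟩ := Finset.mem_filter.mp h
          refine Finset.mem_powersetCard.mpr ⟨fun v hv => Finset.mem_filter.mpr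
            ⟨Finset.mem_univ _, fun hlt => hne ⟨v, hv, hlt⟩⟩, (Finset.mem_powersetCard.mp heP).2⟩
        · intro h
          obtain ⟨hsub, hc⟩ := Finset.mem_powersetCard.mp h
          refine Finset.mem_filter.mpr
            ⟨Finset.mem_powersetCard.mpr ⟨Finset.subset_univ e, hc⟩, ?_⟩
          rintro ⟨v, hv, hlt⟩
          exact (Finset.mem_filter.mp (hsub hv)).2 hlt
      have hsplit := Finset.card_filter_add_card_filter_not
        (s := P) (p := fun e => ∃ v ∈ e, v.val < t)
      have hLcard : (P.filter fun e => ¬∃ v ∈ e, v.val < t).card = m.choose r := by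
        rw [hPL, Finset.card_powersetCard, hlarge]
      rw [hFeq]
      omega
    have hHcard : (F ∪ S).card = n.choose r - m.choose r + D m r := by
      rw [Finset.card_union_of_disjoint hdisj, hFcard, hScard]
    have hle : f n k r ≤ (F ∪ S).card := Nat.sInf_le ⟨F ∪ S, hcov, rfl⟩
    rw [hHcard] at hle
    unfold g
    rw [← hm]
    exact hle
  · have hrn : r ≤ n := by omega
    have hmn : n - k + r - 1 = n := by omega
    obtain ⟨H₀, ⟨hu, hc⟩, hcard⟩ := existsMinCover n r hrn
    have hcov : CoversAllK n k r H₀ := by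
      refine ⟨hu, fun A hA => ?_⟩
      obtain ⟨e, heH, hAe⟩ := hc A (by omega)
      have hec := hu e heH
      have hne : A ≠ e := by intro h; rw [h, hec] at hA; omega
      obtain ⟨u, hue, huA⟩ := Finset.exists_of_ssubset (hAe.ssubset_of_ne hne)
      refine ⟨u, huA, fun B hBA hBc => ?_⟩
      have hBeq : B = A := Finset.eq_of_subset_of_card_le hBA (by omega)
      have huB : u ∉ B := fun h => huA (hBA h)
      have hins : insert u B = e := by
        apply Finset.eq_of_subset_of_card_le
        · exact Finset.insert_subset hue (hBeq ▸ hAe)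
        · rw [card_insert_of_notMem huB, hBc, hec]; omega
      rw [hins]
      exact heH
    have hle : f n k r ≤ H₀.card := Nat.sInf_le ⟨H₀, hcov, rfl⟩
    rw [hcard] at hle
    unfold g
    rw [hmn]
    omega

/-- Every element of the family `𝒢(n,k,r)` covers all `k`-sets; consequently
`f(n,k,r) ≤ g(n,k,r)`. -/
theorem G_covers_and_f_le_g (n k r : ℕ) (hr : 2 ≤ r) (hk : r - 1 ≤ k) (hn : k < n) :
    (∀ H : Finset (Finset (Fin n)), InG n k r H →
        ∀ A : Finset (Fin n), A.card = k → CoveredIn r H A) ∧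
      f n k r ≤ g n k r := by
  exact ⟨part1 n k r hr hk hn, part2 n k r hr hk hn⟩
end

section
/- For every fixed integer r ≥ 2 and every ε > 0 there is an integer n₀ such that for all n ≥ n₀, D(n,r) ≤ (1+ε)·C(n, r−1)/r. Together with the lower bound D(n,r) ≥ C(n,r−1)/r, this gives D(n,r) = (1+o(1))·C(n,r−1)/r as n → ∞. -/
open Finset

/-!
Identify the vertex set with `ℤ/n` and take as edges the `r`-sets with zero sum. An
`(r-1)`-set `B` lies in at most one of them, namely `B ∪ {-∑ B}`, so there are at most
`C(n,r-1)/r` of them, and they cover every `B` with `-∑ B ∉ B`. The remaining sets `B` are few: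
with `u = -∑ B ∈ B` we have `2u = -∑ (B \ {u})`, so `B` is determined by `B \ {u}` together
with the half of `ℤ/n` containing `u`, giving at most `2 C(n,r-2)` of them; each gets an
arbitrary edge of its own. Hence `r D(n,r) ≤ C(n,r-1) + 2r C(n,r-2) = (1 + O(1/n)) C(n,r-1)`.
-/

section ZeroSum

variable {G : Type*} [AddCommGroup G] [DecidableEq G]

lemma eq_insert_neg_sum_of_sum_eq_zero {e B : Finset G} (he : ∑ v ∈ e, v = 0)
    (hBe : B ⊆ e) (hcard : #e = #B + 1) : e = insert (-∑ v ∈ B, v) B := by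
  obtain ⟨u, hu, rfl⟩ := exists_eq_insert_iff.mpr ⟨hBe, hcard.symm⟩
  rw [sum_insert hu, add_eq_zero_iff_eq_neg] at he
  rw [he]

lemma neg_sum_add_self_eq {B : Finset G} (h : -∑ v ∈ B, v ∈ B) :
    (-∑ v ∈ B, v) + (-∑ v ∈ B, v) = -∑ v ∈ B.erase (-∑ v ∈ B, v), v := by
  rw [eq_neg_iff_add_eq_zero, add_assoc, add_sum_erase B (fun v => v) h, neg_add_cancel]

variable [Fintype G]

variable (G) in
def zeroSumSets (r : ℕ) : Finset (Finset G) :=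
  {e | #e = r ∧ ∑ v ∈ e, v = 0}

variable (G) in
def selfCompletingSets (k : ℕ) : Finset (Finset G) :=
  {B | #B = k ∧ -∑ v ∈ B, v ∈ B}

lemma insert_neg_sum_mem_zeroSumSets {B : Finset G} (hB : -∑ v ∈ B, v ∉ B) :
    insert (-∑ v ∈ B, v) B ∈ zeroSumSets G (#B + 1) := by
  simp [zeroSumSets, card_insert_of_notMem hB, sum_insert hB]

lemma card_zeroSumSets_mul_le {r : ℕ} (hr : 1 ≤ r) :
    #(zeroSumSets G r) * r ≤ (Fintype.card G).choose (r - 1) := by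
  have hcount := card_mul_le_card_mul (fun e B => B ⊆ e) (s := zeroSumSets G r)
    (t := (univ : Finset G).powersetCard (r - 1)) (m := r) (n := 1) ?_ ?_
  · simpa using hcount
  · intro e he
    have hcard : #e = r := (mem_filter.mp he).2.1
    have hshadow : ((univ : Finset G).powersetCard (r - 1)).bipartiteAbove (fun e B => B ⊆ e) e =
        e.powersetCard (r - 1) := by
      ext B; simp [mem_bipartiteAbove, and_comm]
    rw [hshadow, card_powersetCard, hcard,
      Nat.choose_symm_of_eq_add (show r = (r - 1) + 1 by omega), Nat.choose_one_right]
  · intro B hB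
    rw [mem_powersetCard] at hB
    refine card_le_one.mpr fun e₁ he₁ e₂ he₂ => ?_
    simp only [zeroSumSets, mem_bipartiteBelow, mem_filter, mem_univ, true_and] at he₁ he₂
    rw [eq_insert_neg_sum_of_sum_eq_zero he₁.1.2 he₁.2 (by omega),
      eq_insert_neg_sum_of_sum_eq_zero he₂.1.2 he₂.2 (by omega)]

end ZeroSum

lemma Fin.eq_of_add_self_eq {n : ℕ} {u v : Fin n} (h : u + u = v + v)
    (hlt : 2 * u.val < n ↔ 2 * v.val < n) : u = v := by
  have hval := congrArg Fin.val h
  rw [Fin.val_add_eq_ite, Fin.val_add_eq_ite] at hval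
  ext
  split_ifs at hval <;> omega

lemma card_selfCompletingSets_fin_le {n : ℕ} [NeZero n] (k : ℕ) :
    #(selfCompletingSets (Fin n) k) ≤ 2 * n.choose (k - 1) := by
  let u : Finset (Fin n) → Fin n := fun B => -∑ v ∈ B, v
  have hinj := card_le_card_of_injOn (s := selfCompletingSets (Fin n) k)
    (t := (univ : Finset (Fin n)).powersetCard (k - 1) ×ˢ (univ : Finset Bool))
    (fun B => (B.erase (u B), decide (2 * (u B).val < n))) ?maps ?inj
  · simpa [mul_comm] using hinj
  case maps =>
    intro B hB
    obtain ⟨hcard, hmem⟩ := (mem_filter.mp hB).2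
    simp [u, card_erase_of_mem hmem, hcard]
    omega
  case inj =>
    intro B₁ hB₁ B₂ hB₂ heq
    obtain ⟨-, hmem₁⟩ := (mem_filter.mp hB₁).2
    obtain ⟨-, hmem₂⟩ := (mem_filter.mp hB₂).2
    obtain ⟨herase, hlt⟩ := Prod.mk.inj heq
    have hu : u B₁ = u B₂ := Fin.eq_of_add_self_eq
      (by simp only [u, neg_sum_add_self_eq hmem₁, neg_sum_add_self_eq hmem₂]; rw [herase])
      (by simpa using hlt)
    rw [← insert_erase hmem₁, ← insert_erase hmem₂]
    exact congrArg₂ insert hu herase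

lemma D_le_card {n r : ℕ} {H : Finset (Finset (Fin n))} (hH : CoversShadows n r H) :
    D n r ≤ #H :=
  Nat.sInf_le ⟨H, hH, rfl⟩

lemma D_le_card_add_card {n r : ℕ} (hrn : r ≤ n) {H bad : Finset (Finset (Fin n))}
    (hH : IsUniform r H) (hbad : ∀ B ∈ bad, #B = r - 1)
    (hcov : ∀ B : Finset (Fin n), #B = r - 1 → B ∉ bad → ∃ e ∈ H, B ⊆ e) :
    D n r ≤ #H + #bad := by
  have hext : ∀ B : Finset (Fin n), ∃ e, #B = r - 1 → B ⊆ e ∧ #e = r := fun B => by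
    by_cases hB : #B = r - 1
    · obtain ⟨e, hBe, -, he⟩ := exists_subsuperset_card_eq (n := r) (subset_univ B) (by omega)
        (by simpa using hrn)
      exact ⟨e, fun _ => ⟨hBe, he⟩⟩
    · exact ⟨∅, fun h => absurd h hB⟩
  choose ext hext using hext
  calc D n r ≤ #(H ∪ bad.image ext) := D_le_card ⟨?uniform, ?covers⟩
    _ ≤ #H + #bad := (card_union_le _ _).trans (add_le_add_right card_image_le _)
  case uniform =>
    intro e he
    rcases mem_union.mp he with he | he
    · exact hH e he
    · obtain ⟨B, hB, rfl⟩ := mem_image.mp he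
      exact (hext B (hbad B hB)).2
  case covers =>
    intro B hB
    by_cases hBbad : B ∈ bad
    · exact ⟨ext B, mem_union_right _ (mem_image_of_mem _ hBbad), (hext B hB).1⟩
    · obtain ⟨e, he, hBe⟩ := hcov B hB hBbad
      exact ⟨e, mem_union_left _ he, hBe⟩

lemma mul_D_le {n r : ℕ} (hr : 2 ≤ r) (hrn : r ≤ n) :
    r * D n r ≤ n.choose (r - 1) + 2 * r * n.choose (r - 2) := by
  have : NeZero n := ⟨by omega⟩
  have hD : D n r ≤ #(zeroSumSets (Fin n) r) + #(selfCompletingSets (Fin n) (r - 1)) := by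
    refine D_le_card_add_card hrn (fun e he => (mem_filter.mp he).2.1)
      (fun B hB => (mem_filter.mp hB).2.1) fun B hB hBbad => ?_
    have hnotMem : -∑ v ∈ B, v ∉ B := fun h => hBbad (mem_filter.mpr ⟨mem_univ _, hB, h⟩)
    refine ⟨insert (-∑ v ∈ B, v) B, ?_, subset_insert _ B⟩
    simpa [hB, Nat.sub_add_cancel (by omega : 1 ≤ r)] using
      insert_neg_sum_mem_zeroSumSets hnotMem
  have hzero := card_zeroSumSets_mul_le (G := Fin n) (by omega : 1 ≤ r)
  have hself := card_selfCompletingSets_fin_le (n := n) (r - 1)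
  rw [Fintype.card_fin] at hzero
  rw [Nat.sub_sub] at hself
  calc r * D n r
      ≤ #(zeroSumSets (Fin n) r) * r + r * #(selfCompletingSets (Fin n) (r - 1)) := by
        rw [mul_comm _ r, ← mul_add]; gcongr
    _ ≤ n.choose (r - 1) + 2 * r * n.choose (r - 2) := by
        rw [mul_assoc 2, mul_left_comm]; gcongr

lemma choose_sub_one_mul_eq {n r : ℕ} (hr : 2 ≤ r) (hrn : r ≤ n) :
    (n.choose (r - 1) : ℝ) * (r - 1) = n.choose (r - 2) * (n - r + 2) := by
  have h := Nat.choose_succ_right_eq n (r - 2)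
  rw [show r - 2 + 1 = r - 1 by omega] at h
  have h' : ((n.choose (r - 1) * (r - 1) : ℕ) : ℝ) = (n.choose (r - 2) * (n - (r - 2)) : ℕ) :=
    congrArg _ h
  rw [Nat.cast_mul, Nat.cast_mul, Nat.cast_sub (by omega), Nat.cast_sub (by omega),
    Nat.cast_sub (by omega), Nat.cast_one, Nat.cast_ofNat] at h'
  rw [h']
  ring

lemma two_mul_choose_sub_two_le {n r : ℕ} {ε : ℝ} (hr : 2 ≤ r) (hrn : r ≤ n)
    (hε : 2 * (r : ℝ) ^ 2 ≤ ε * (n - r + 2)) :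
    2 * r * (n.choose (r - 2) : ℝ) ≤ ε * n.choose (r - 1) := by
  have hx : (0 : ℝ) < n - r + 2 := by
    have : (r : ℝ) ≤ n := by exact_mod_cast hrn
    linarith
  have hC : (0 : ℝ) ≤ n.choose (r - 1) := by positivity
  refine le_of_mul_le_mul_right ?_ hx
  calc 2 * r * (n.choose (r - 2) : ℝ) * (n - r + 2)
      = 2 * r * (n.choose (r - 1) * (r - 1)) := by rw [choose_sub_one_mul_eq hr hrn]; ring
    _ ≤ 2 * r ^ 2 * n.choose (r - 1) := by nlinarith
    _ ≤ ε * (n - r + 2) * n.choose (r - 1) := by gcongr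
    _ = ε * n.choose (r - 1) * (n - r + 2) := by ring

/-- For fixed `r ≥ 2` and every `ε > 0`, for all sufficiently large `n` we have
`D(n,r) ≤ (1+ε)·C(n,r-1)/r`; with the trivial lower bound, this gives
`D(n,r) = (1+o(1))·C(n,r-1)/r`. -/
theorem D_upper_bound (r : ℕ) (hr : 2 ≤ r) (ε : ℝ) (hε : 0 < ε) :
    ∃ n₀ : ℕ, ∀ n : ℕ, n₀ ≤ n →
      (D n r : ℝ) ≤ (1 + ε) * (n.choose (r - 1) : ℝ) / (r : ℝ) := by
  refine ⟨r + ⌈2 * (r : ℝ) ^ 2 / ε⌉₊, fun n hn => ?_⟩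
  have hrn : r ≤ n := by omega
  have hlarge : 2 * (r : ℝ) ^ 2 ≤ ε * (n - r + 2) := by
    have hceil := Nat.le_ceil (2 * (r : ℝ) ^ 2 / ε)
    have hn' : (r : ℝ) + ⌈2 * (r : ℝ) ^ 2 / ε⌉₊ ≤ n := by exact_mod_cast hn
    have := (div_le_iff₀ hε).mp (show 2 * (r : ℝ) ^ 2 / ε ≤ n - r by linarith)
    linarith
  have hD : (r : ℝ) * D n r ≤ n.choose (r - 1) + 2 * r * n.choose (r - 2) := by
    exact_mod_cast mul_D_le hr hrn
  have hC := two_mul_choose_sub_two_le hr hrn hlarge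
  rw [le_div_iff₀ (by positivity)]
  linarith
end

section
/- Let k ≥ r ≥ 2 and n ≥ k, and let H be an r-uniform hypergraph on n vertices in which every k-set of vertices is covered. Then every r-set R of vertices is covered by at least k−r+1 distinct vertices of H. -/
open Finset

/-- If every `k`-set is covered in the `r`-uniform hypergraph `H`, then every `r`-set is
covered by at least `k - r + 1` distinct vertices. -/
theorem rset_covered_many_times (n k r : ℕ) (hr : 2 ≤ r) (hk : r ≤ k) (hn : k ≤ n)
    (H : Finset (Finset (Fin n))) (hH : CoversAllK n k r H)
    (R : Finset (Fin n)) (hR : R.card = r) :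
    k - r + 1 ≤ {u : Fin n | Covers r H u R}.ncard := by
  classical
  set C : Finset (Fin n) := Finset.univ.filter (fun u => Covers r H u R) with hC
  have hset : {u : Fin n | Covers r H u R} = ↑C := by
    ext u; simp [hC]
  rw [hset, Set.ncard_coe_finset]
  by_contra hlt
  push_neg at hlt
  have hCle : C.card ≤ k - r := by omega
  -- R and C are disjoint
  have hdisj : Disjoint R C := by
    rw [Finset.disjoint_right]
    intro u hu huR
    have : Covers r H u R := (Finset.mem_filter.mp hu).2
    exact this.1 huR
  have hcard : (R ∪ C).card ≤ k := by
    have := Finset.card_union_le R C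
    omega
  have hkn : k ≤ Fintype.card (Fin n) := by simp [hn]
  obtain ⟨A, hRA, hAcard⟩ := Finset.exists_superset_card_eq hcard hkn
  obtain ⟨u, huA, hucov⟩ := hH.2 A hAcard
  have huR : Covers r H u R := by
    constructor
    · intro huR
      exact huA (hRA (Finset.mem_union_left _ huR))
    · intro B hB hBcard
      exact hucov B (hB.trans (fun x hx => hRA (Finset.mem_union_left _ hx))) hBcard
  have : u ∈ C := Finset.mem_filter.mpr ⟨Finset.mem_univ u, huR⟩
  exact huA (hRA (Finset.mem_union_right _ this))
end

section
/- Let r ≥ 2, let H be an r-uniform hypergraph, let u be a vertex of H, and let x ≥ r be an integer. If u covers at least C(x, r) distinct r-sets of vertices of H, then the degree of u in H is at least C(x, r−1). -/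
open Finset

/-!
The `r`-sets covered by `u` form an `r`-uniform family `𝒜` with at least `C(x, r)` members, so by
the Lovász form of the Kruskal–Katona theorem its shadow has at least `C(x, r - 1)` members. Every
`B ∈ ∂𝒜` lies in some `A ∈ 𝒜`, hence `insert u B` is an edge through `u`; as `u ∉ B`, the map
`B ↦ insert u B` is injective, so the shadow embeds into the link of `u`.
-/

open scoped FinsetFamily

theorem Nat.choose_lt_choose_of_lt {n m k : ℕ} (hk : 0 < k) (hkm : k ≤ m) (hnm : n < m) :
    n.choose k < m.choose k := by
  rcases lt_or_ge n k with hnk | hkn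
  · rw [Nat.choose_eq_zero_of_lt hnk]
    exact Nat.choose_pos hkm
  · obtain ⟨j, rfl⟩ : ∃ j, k = j + 1 := ⟨k - 1, by omega⟩
    calc n.choose (j + 1) < n.choose j + n.choose (j + 1) :=
          Nat.lt_add_of_pos_left (Nat.choose_pos (by omega))
      _ = (n + 1).choose (j + 1) := (Nat.choose_succ_succ n j).symm
      _ ≤ m.choose (j + 1) := Nat.choose_le_choose _ hnm

theorem Set.Sized.le_card_of_choose_le_card {α : Type*} [Fintype α] {𝒜 : Finset (Finset α)}
    {r x : ℕ} (h𝒜 : (𝒜 : Set (Finset α)).Sized r) (hr : 0 < r) (hrx : r ≤ x)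
    (hx : x.choose r ≤ #𝒜) : x ≤ Fintype.card α := by
  by_contra! hlt
  exact (hx.trans h𝒜.card_le).not_gt (Nat.choose_lt_choose_of_lt hr hrx hlt)

theorem card_shadow_le_degreeH_of_covers {n r : ℕ} {H : Finset (Finset (Fin n))} {u : Fin n}
    {𝒜 : Finset (Finset (Fin n))} (h𝒜 : (𝒜 : Set (Finset (Fin n))).Sized r)
    (hcov : ∀ A ∈ 𝒜, Covers r H u A) : #(∂ 𝒜) ≤ degreeH H u := by
  have hu : ∀ B ∈ ∂ 𝒜, u ∉ B := by
    intro B hB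
    obtain ⟨A, hA, hBA, -⟩ := mem_shadow_iff_exists_mem_card_add_one.1 hB
    exact fun huB => (hcov A hA).1 (hBA huB)
  refine card_le_card_of_injOn (insert u) (fun B hB => ?_) (fun B hB B' hB' hBB' => ?_)
  · obtain ⟨A, hA, hBA, hcard⟩ := mem_shadow_iff_exists_mem_card_add_one.1 hB
    have hBr : #B = r - 1 := by rw [← h𝒜 hA, hcard, Nat.add_sub_cancel]
    exact mem_filter.2 ⟨(hcov A hA).2 B hBA hBr, mem_insert_self u B⟩
  · simpa only [erase_insert (hu B hB), erase_insert (hu B' hB')] using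
      congrArg (Finset.erase · u) hBB'

theorem degree_of_covering_vertex_general (n r : ℕ) (hr : 2 ≤ r) (H : Finset (Finset (Fin n)))
    (u : Fin n) (x : ℕ) (hx : r ≤ x)
    (hcov : x.choose r ≤ {A : Finset (Fin n) | A.card = r ∧ Covers r H u A}.ncard) :
    x.choose (r - 1) ≤ degreeH H u := by
  set S := {A : Finset (Fin n) | A.card = r ∧ Covers r H u A}
  set 𝒜 := (Set.toFinite S).toFinset
  rw [Set.ncard_eq_toFinset_card S] at hcov
  have h𝒜 : (𝒜 : Set (Finset (Fin n))).Sized r := fun A hA =>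
    ((Set.Finite.mem_toFinset _).1 hA).1
  have hxn : x ≤ n := by
    simpa using h𝒜.le_card_of_choose_le_card (by omega) hx hcov
  calc x.choose (r - 1) ≤ #(∂ 𝒜) := by
        simpa using kruskal_katona_lovasz_form (i := 1) (by omega) hx hxn h𝒜 hcov
    _ ≤ degreeH H u :=
        card_shadow_le_degreeH_of_covers h𝒜 fun A hA => ((Set.Finite.mem_toFinset _).1 hA).2

/-- Kruskal–Katona consequence: if a vertex `u` of an `r`-uniform hypergraph covers at
least `C(x,r)` distinct `r`-sets (`x ≥ r` an integer), then `u` has degree at least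
`C(x,r-1)`. -/
theorem degree_of_covering_vertex (n r : ℕ) (hr : 2 ≤ r) (H : Finset (Finset (Fin n)))
    (hH : IsUniform r H) (u : Fin n) (x : ℕ) (hx : r ≤ x)
    (hcov : x.choose r ≤ {A : Finset (Fin n) | A.card = r ∧ Covers r H u A}.ncard) :
    x.choose (r - 1) ≤ degreeH H u :=
  degree_of_covering_vertex_general n r hr H u x hx hcov
end

section
/- Let k ≥ r ≥ 3, and let H be an r-uniform hypergraph on a vertex set V with |V| = n in which every k-set of vertices is covered. For any vertex v of H, let H_v be the (r−1)-uniform hypergraph on V \ {v} whose edges are the sets e \ {v} for edges e of H containing v. Then every (k−1)-set of vertices of H_v is covered in H_v; consequently the degree of v in H is at least f(n−1, k−1, r−1). -/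
open Finset

/-- If every `k`-set is covered in the `r`-uniform hypergraph `H` (`k ≥ r ≥ 3`), then for
every vertex `v`, every `(k-1)`-set avoiding `v` is covered in the link hypergraph `H_v`;
consequently the degree of `v` is at least `f(n-1,k-1,r-1)`. -/
theorem link_covers_and_min_degree (n k r : ℕ) (hr : 3 ≤ r) (hk : r ≤ k)
    (H : Finset (Finset (Fin n))) (hH : CoversAllK n k r H) (v : Fin n) :
    (∀ A : Finset (Fin n), v ∉ A → A.card = k - 1 →
        ∃ u, u ≠ v ∧
          Covers (r - 1) ((H.filter fun e => v ∈ e).image fun e => e.erase v) u A) ∧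
      f (n - 1) (k - 1) (r - 1) ≤ degreeH H v := by
  classical
  have hn : n ≠ 0 := by rintro rfl; exact v.elim0
  obtain ⟨m, rfl⟩ := Nat.exists_eq_succ_of_ne_zero hn
  have part1 : ∀ A : Finset (Fin (m+1)), v ∉ A → A.card = k - 1 →
      ∃ u, u ≠ v ∧
        Covers (r - 1) ((H.filter fun e => v ∈ e).image fun e => e.erase v) u A := by
    intro A hvA hAcard
    obtain ⟨u, huA, hu⟩ := hH.2 (insert v A) (by
      rw [Finset.card_insert_of_notMem hvA, hAcard]; omega)
    have huv : u ≠ v := fun h => huA (h ▸ Finset.mem_insert_self v A)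
    refine ⟨u, huv, fun h => huA (Finset.mem_insert_of_mem h), ?_⟩
    intro B hBA hBcard
    have hvB : v ∉ B := fun h => hvA (hBA h)
    have h1 : insert u (insert v B) ∈ H := by
      apply hu
      · exact Finset.insert_subset_insert v hBA
      · rw [Finset.card_insert_of_notMem hvB, hBcard]; omega
    refine Finset.mem_image.mpr ⟨insert u (insert v B), Finset.mem_filter.mpr ⟨h1, by simp⟩, ?_⟩
    rw [Finset.insert_comm, Finset.erase_insert]
    simp only [Finset.mem_insert, not_or]
    exact ⟨fun h => huv h.symm, hvB⟩
  refine ⟨part1, ?_⟩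
  set f0 : Fin m → Fin (m+1) := v.succAbove with hf0
  have hinj : Function.Injective f0 := Fin.succAbove_right_injective
  have hne : ∀ x : Fin m, f0 x ≠ v := fun x => Fin.succAbove_ne v x
  set L := (H.filter fun e => v ∈ e).image fun e => e.erase v with hL
  set H' : Finset (Finset (Fin m)) := L.image fun e => e.preimage f0 hinj.injOn with hH'
  have himgpre : ∀ e : Finset (Fin (m+1)), v ∉ e →
      (e.preimage f0 hinj.injOn).image f0 = e := by
    intro e hve
    ext x
    simp only [Finset.mem_image, Finset.mem_preimage]
    constructor
    · rintro ⟨y, hy, rfl⟩; exact hy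
    · intro hx
      obtain ⟨y, hy⟩ := Fin.exists_succAbove_eq (fun h : x = v => hve (h ▸ hx))
      exact ⟨y, by rw [hf0, hy]; exact hx, hy⟩
  have hpreimg : ∀ s : Finset (Fin m), (s.image f0).preimage f0 hinj.injOn = s := by
    intro s; ext x
    simp only [Finset.mem_preimage, Finset.mem_image]
    constructor
    · rintro ⟨y, hy, he⟩; exact hinj he ▸ hy
    · intro hx; exact ⟨x, hx, rfl⟩
  have hLprop : ∀ e ∈ L, v ∉ e ∧ e.card = r - 1 := by
    intro e he
    obtain ⟨e₀, he₀, rfl⟩ := Finset.mem_image.mp he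
    obtain ⟨he₀H, hve₀⟩ := Finset.mem_filter.mp he₀
    exact ⟨Finset.notMem_erase v e₀,
      by rw [Finset.card_erase_of_mem hve₀, hH.1 e₀ he₀H]⟩
  have hcov : CoversAllK m (k-1) (r-1) H' := by
    constructor
    · intro e' he'
      obtain ⟨e, heL, rfl⟩ := Finset.mem_image.mp he'
      obtain ⟨hve, hec⟩ := hLprop e heL
      have := Finset.card_image_of_injective (e.preimage f0 hinj.injOn) hinj
      rw [himgpre e hve] at this
      rw [← this]; exact hec
    · intro A' hA'
      have hvA : v ∉ A'.image f0 := by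
        simp only [Finset.mem_image, not_exists]
        rintro x ⟨hx, hfx⟩
        exact hne x hfx
      obtain ⟨u, huv, huA, hucov⟩ := part1 (A'.image f0) (by
        simp only [Finset.mem_image, not_exists, not_and]
        exact fun x _ => hne x) (by rw [Finset.card_image_of_injective _ hinj, hA'])
      obtain ⟨u', hu'⟩ := Fin.exists_succAbove_eq huv
      refine ⟨u', fun h => huA ?_, ?_⟩
      · exact Finset.mem_image.mpr ⟨u', h, hu'⟩
      · intro B' hB' hB'card
        have hBA : B'.image f0 ⊆ A'.image f0 := Finset.image_subset_image hB'
        have hmem : insert u (B'.image f0) ∈ L := hucov (B'.image f0) hBA (by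
          rw [Finset.card_image_of_injective _ hinj, hB'card])
        have heq : insert u (B'.image f0) = (insert u' B').image f0 := by
          rw [Finset.image_insert, show f0 u' = u from hu']
        refine Finset.mem_image.mpr ⟨insert u (B'.image f0), hmem, ?_⟩
        rw [heq, hpreimg]
  have hmemset : H'.card ∈ {q | ∃ G : Finset (Finset (Fin m)),
      CoversAllK m (k-1) (r-1) G ∧ G.card = q} := ⟨H', hcov, rfl⟩
  have hf : f m (k-1) (r-1) ≤ H'.card := Nat.sInf_le hmemset
  have hcard : H'.card ≤ degreeH H v :=
    le_trans Finset.card_image_le Finset.card_image_le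
  exact le_trans hf hcard
end

section
/- Fix an integer k ≥ 2 and suppose there exists a finite oriented graph with property S_k. Then there are integers c = c(k) and n₀ = n₀(k) such that for all n ≥ n₀, F(n,k) = δ(k)·n + c. -/
/-- The number of edges of a digraph on `Fin n` given by the relation `G`. -/
noncomputable def EdgeCount (n : ℕ) (G : Fin n → Fin n → Prop) : ℕ :=
  {p : Fin n × Fin n | G p.1 p.2}.ncard

/-- The set of inneighbours of a vertex `v`. -/
def InNbrs (n : ℕ) (G : Fin n → Fin n → Prop) (v : Fin n) : Set (Fin n) :=
  {u | G u v}

/-- A loopless digraph. -/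
def Loopless (n : ℕ) (G : Fin n → Fin n → Prop) : Prop :=
  ∀ v, ¬ G v v

/-- An oriented graph: loopless, with no pair of oppositely directed edges. -/
def Oriented (n : ℕ) (G : Fin n → Fin n → Prop) : Prop :=
  (∀ v, ¬ G v v) ∧ ∀ u v, G u v → ¬ G v u

/-- Property `S_k` (Schütte): at least `k+1` vertices, and for every `k`-set `B` of
vertices there is a vertex whose outneighbourhood contains `B`. -/
def HasS (n k : ℕ) (G : Fin n → Fin n → Prop) : Prop :=
  k + 1 ≤ n ∧ ∀ B : Finset (Fin n), B.card = k → ∃ u, ∀ v ∈ B, G u v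

/-- `F(n,k)`: the minimum number of edges of an oriented graph on `n` vertices with
property `S_k` (equivalently, the minimum number of edges of a graph of order `n`
admitting an orientation with property `S_k`). -/
noncomputable def Fdir (n k : ℕ) : ℕ :=
  sInf {m | ∃ G : Fin n → Fin n → Prop, Oriented n G ∧ HasS n k G ∧ EdgeCount n G = m}

/-- `δ(k)`: the smallest positive integer `δ` such that some finite oriented graph with
property `S_k` has a vertex of indegree `δ`. -/
noncomputable def deltaMin (k : ℕ) : ℕ :=
  sInf {d | 0 < d ∧ ∃ n, ∃ G : Fin n → Fin n → Prop,
    Oriented n G ∧ HasS n k G ∧ ∃ v, (InNbrs n G v).ncard = d}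

/-- Membership in the family `𝒜(n,k)`: all directed edges between distinct elements of
`{0,…,k}`; every vertex outside `{0,…,k}` has exactly `k` inneighbours, all inside
`{0,…,k}`, and no outedges. -/
def InA (n k : ℕ) (G : Fin n → Fin n → Prop) : Prop :=
  (∀ a b : Fin n, (a : ℕ) < k + 1 → (b : ℕ) < k + 1 → (G a b ↔ a ≠ b)) ∧
  (∀ x : Fin n, k + 1 ≤ (x : ℕ) →
      (InNbrs n G x).ncard = k ∧ ∀ u, G u x → (u : ℕ) < k + 1) ∧
  (∀ x : Fin n, k + 1 ≤ (x : ℕ) → ∀ y, ¬ G x y)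


lemma edgeCount_eq_sum (n : ℕ) (G : Fin n → Fin n → Prop) :
    EdgeCount n G = ∑ v : Fin n, (InNbrs n G v).ncard := by
  classical
  have h1 : EdgeCount n G
      = (Finset.univ.filter (fun p : Fin n × Fin n => G p.1 p.2)).card := by
    rw [EdgeCount, ← Set.ncard_coe_finset]; congr 1; ext p; simp
  rw [h1, Finset.card_eq_sum_card_fiberwise
    (f := Prod.snd) (t := Finset.univ) (fun x _ => Finset.mem_univ _)]
  apply Finset.sum_congr rfl
  intro v _
  have h2 : (InNbrs n G v).ncard = (Finset.univ.filter (fun u => G u v)).card := by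
    rw [← Set.ncard_coe_finset]; congr 1; ext u; simp [InNbrs]
  rw [h2]
  apply Finset.card_nbij' (fun p => p.1) (fun u => (u, v))
  · intro p hp; simp at hp ⊢; exact hp.2 ▸ hp.1
  · intro u hu; simp at hu ⊢; exact hu
  · intro p hp; simp at hp ⊢; exact Prod.ext rfl hp.2.symm
  · intro u hu; rfl

lemma indeg_pos (n k : ℕ) (G : Fin n → Fin n → Prop) (hS : HasS n k G)
    (hk : 1 ≤ k) (v : Fin n) : 0 < (InNbrs n G v).ncard := by
  classical
  obtain ⟨hn, hS⟩ := hS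
  have hcard : (1 : ℕ) ≤ k := hk
  obtain ⟨B, hBsub, hBcard⟩ := Finset.exists_superset_card_eq
    (s := ({v} : Finset (Fin n))) (n := k) (by simpa using hcard)
    (by simpa using le_trans (Nat.le_succ k) hn)
  obtain ⟨u, hu⟩ := hS B hBcard
  have : u ∈ InNbrs n G v := hu v (hBsub (Finset.mem_singleton_self v))
  have hfin : (InNbrs n G v).Finite := Set.toFinite _
  exact (Set.ncard_pos hfin).mpr ⟨u, this⟩

lemma deltaMin_le_indeg (k n : ℕ) (hk : 1 ≤ k) (G : Fin n → Fin n → Prop)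
    (hG : Oriented n G) (hS : HasS n k G) (v : Fin n) :
    deltaMin k ≤ (InNbrs n G v).ncard :=
  Nat.sInf_le ⟨indeg_pos n k G hS hk v, n, G, hG, hS, v, rfl⟩

lemma edgeCount_lower (n k : ℕ) (hk : 1 ≤ k) (G : Fin n → Fin n → Prop)
    (hG : Oriented n G) (hS : HasS n k G) :
    deltaMin k * n ≤ EdgeCount n G := by
  rw [edgeCount_eq_sum]
  calc deltaMin k * n = ∑ _v : Fin n, deltaMin k := by
        simp [Finset.sum_const, Nat.mul_comm]
    _ ≤ ∑ v : Fin n, (InNbrs n G v).ncard :=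
        Finset.sum_le_sum (fun v _ => deltaMin_le_indeg k n hk G hG hS v)

lemma clone_exists (n k : ℕ) (hk : 1 ≤ k) (G : Fin n → Fin n → Prop) (hG : Oriented n G)
    (hS : HasS n k G) (v : Fin n) :
    ∃ G' : Fin (n+1) → Fin (n+1) → Prop, Oriented (n+1) G' ∧ HasS (n+1) k G' ∧
      (InNbrs (n+1) G' (Fin.last n)).ncard = (InNbrs n G v).ncard ∧
      EdgeCount (n+1) G' = EdgeCount n G + (InNbrs n G v).ncard := by
  classical
  set G' : Fin (n+1) → Fin (n+1) → Prop := fun a b =>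
    (∃ (ha : (a : ℕ) < n) (hb : (b : ℕ) < n), G ⟨a, ha⟩ ⟨b, hb⟩) ∨
    (b = Fin.last n ∧ ∃ ha : (a : ℕ) < n, G ⟨a, ha⟩ v) with hG'def
  have hlastval : ((Fin.last n : Fin (n+1)) : ℕ) = n := rfl
  -- indegree identities
  have hA : ∀ w : Fin n, InNbrs (n+1) G' (Fin.castSucc w) = Fin.castSucc '' InNbrs n G w := by
    intro w
    ext u
    constructor
    · rintro (⟨ha, hb, h⟩ | ⟨hlast, -⟩)
      · refine ⟨⟨(u : ℕ), ha⟩, ?_, Fin.ext rfl⟩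
        have hw : (⟨((Fin.castSucc w : Fin (n+1)) : ℕ), hb⟩ : Fin n) = w := Fin.ext rfl
        rwa [hw] at h
      · exfalso
        have := congrArg Fin.val hlast
        simp [Fin.last] at this
        omega
    · rintro ⟨x, hx, rfl⟩
      exact Or.inl ⟨x.isLt, w.isLt, by
        have h1 : (⟨((Fin.castSucc x : Fin (n+1)) : ℕ), x.isLt⟩ : Fin n) = x := Fin.ext rfl
        have h2 : (⟨((Fin.castSucc w : Fin (n+1)) : ℕ), w.isLt⟩ : Fin n) = w := Fin.ext rfl
        rw [h1, h2]; exact hx⟩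
  have hB : InNbrs (n+1) G' (Fin.last n) = Fin.castSucc '' InNbrs n G v := by
    ext u
    constructor
    · rintro (⟨ha, hb, h⟩ | ⟨-, ha, h⟩)
      · exfalso; rw [hlastval] at hb; omega
      · exact ⟨⟨(u : ℕ), ha⟩, h, Fin.ext rfl⟩
    · rintro ⟨x, hx, rfl⟩
      refine Or.inr ⟨rfl, x.isLt, ?_⟩
      have h1 : (⟨((Fin.castSucc x : Fin (n+1)) : ℕ), x.isLt⟩ : Fin n) = x := Fin.ext rfl
      rw [h1]; exact hx
  have hinj : Function.Injective (Fin.castSucc : Fin n → Fin (n+1)) :=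
    Fin.castSucc_injective n
  refine ⟨G', ?_, ?_, ?_, ?_⟩
  -- Oriented
  · constructor
    · rintro a (⟨ha, hb, h⟩ | ⟨hlast, ha, -⟩)
      · exact hG.1 _ h
      · rw [hlast, hlastval] at ha; omega
    · rintro a b (⟨ha, hb, h⟩ | ⟨hlast, ha2, -⟩) (⟨ha', hb', h'⟩ | ⟨hlast', -, -⟩)
      · exact hG.2 _ _ h (by
          have e1 : (⟨(a : ℕ), ha⟩ : Fin n) = ⟨(a : ℕ), hb'⟩ := Fin.ext rfl
          have e2 : (⟨(b : ℕ), hb⟩ : Fin n) = ⟨(b : ℕ), ha'⟩ := Fin.ext rfl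
          rw [e1, e2]; exact h')
      · rw [hlast', hlastval] at ha; omega
      · rw [hlast, hlastval] at ha'; omega
      · rw [hlast', hlastval] at ha2; omega
  -- HasS
  · obtain ⟨hn, hSch⟩ := hS
    refine ⟨by omega, ?_⟩
    intro B hBcard
    set f : Fin (n+1) → Fin n := fun b => if h : (b : ℕ) < n then ⟨b, h⟩ else v with hf
    have hfval : ∀ b : Fin (n+1), (b : ℕ) < n → ((f b : Fin n) : ℕ) = (b : ℕ) := by
      intro b hb; simp [hf, hb]
    have hne_lt : ∀ b : Fin (n+1), b ≠ Fin.last n → (b : ℕ) < n := by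
      intro b hb
      have := b.isLt
      rcases Nat.lt_or_ge (b : ℕ) n with h | h
      · exact h
      · exact absurd (Fin.ext (by omega)) hb
    have hinjOn : ∀ s : Finset (Fin (n+1)), Fin.last n ∉ s → Set.InjOn f s := by
      intro s hs x hx y hy hxy
      have hxl : (x : ℕ) < n := hne_lt x (fun h => hs (h ▸ hx))
      have hyl : (y : ℕ) < n := hne_lt y (fun h => hs (h ▸ hy))
      have : ((f x : Fin n) : ℕ) = ((f y : Fin n) : ℕ) := congrArg Fin.val hxy
      rw [hfval x hxl, hfval y hyl] at this
      exact Fin.ext this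
    by_cases hlB : Fin.last n ∈ B
    · -- last ∈ B
      set B' : Finset (Fin n) := (B.erase (Fin.last n)).image f with hB'
      have hB'card : B'.card = k - 1 := by
        rw [hB', Finset.card_image_of_injOn (hinjOn _ (Finset.notMem_erase _ _)),
          Finset.card_erase_of_mem hlB, hBcard]
      have hCcard : (insert v B').card ≤ k := by
        calc (insert v B').card ≤ B'.card + 1 := Finset.card_insert_le _ _
          _ ≤ k := by omega
      obtain ⟨D, hCD, hDcard⟩ := Finset.exists_superset_card_eq hCcard
        (by simpa using le_trans (Nat.le_succ k) hn)
      obtain ⟨u, hu⟩ := hSch D hDcard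
      refine ⟨Fin.castSucc u, ?_⟩
      intro b hb
      have huval : (⟨((Fin.castSucc u : Fin (n+1)) : ℕ), u.isLt⟩ : Fin n) = u := Fin.ext rfl
      by_cases hbl : b = Fin.last n
      · refine Or.inr ⟨hbl, u.isLt, ?_⟩
        rw [huval]
        exact hu v (hCD (Finset.mem_insert_self _ _))
      · have hblt : (b : ℕ) < n := hne_lt b hbl
        refine Or.inl ⟨u.isLt, hblt, ?_⟩
        have hfb : (⟨(b : ℕ), hblt⟩ : Fin n) = f b := Fin.ext (by rw [hfval b hblt])
        rw [huval, hfb]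
        exact hu (f b) (hCD (Finset.mem_insert_of_mem
          (Finset.mem_image_of_mem f (Finset.mem_erase.mpr ⟨hbl, hb⟩))))
    · -- last ∉ B
      set B' : Finset (Fin n) := B.image f with hB'
      have hB'card : B'.card = k := by
        rw [hB', Finset.card_image_of_injOn (hinjOn _ hlB), hBcard]
      obtain ⟨u, hu⟩ := hSch B' hB'card
      refine ⟨Fin.castSucc u, ?_⟩
      intro b hb
      have hblt : (b : ℕ) < n := hne_lt b (fun h => hlB (h ▸ hb))
      refine Or.inl ⟨u.isLt, hblt, ?_⟩
      have huval : (⟨((Fin.castSucc u : Fin (n+1)) : ℕ), u.isLt⟩ : Fin n) = u := Fin.ext rfl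
      have hfb : (⟨(b : ℕ), hblt⟩ : Fin n) = f b := Fin.ext (by rw [hfval b hblt])
      rw [huval, hfb]
      exact hu (f b) (Finset.mem_image_of_mem f hb)
  -- indegree of last
  · rw [hB, Set.ncard_image_of_injective _ hinj]
  -- edge count
  · rw [edgeCount_eq_sum, edgeCount_eq_sum, Fin.sum_univ_castSucc]
    congr 1
    · apply Finset.sum_congr rfl
      intro w _
      rw [hA w, Set.ncard_image_of_injective _ hinj]
    · rw [hB, Set.ncard_image_of_injective _ hinj]

lemma anti_eventually_const (f : ℕ → ℕ) (hf : ∀ j, f (j+1) ≤ f j) :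
    ∃ m, ∀ j, m ≤ j → f j = f m := by
  have hanti : Antitone f := antitone_nat_of_succ_le hf
  obtain ⟨m, hm⟩ : ∃ m, f m = sInf (Set.range f) := Nat.sInf_mem (Set.range_nonempty f)
  refine ⟨m, fun j hj => le_antisymm (le_trans (hanti hj) (le_of_eq rfl)) ?_⟩
  rw [hm]
  exact Nat.sInf_le ⟨j, rfl⟩

theorem oriented_Fnk_eventually_linear' (k : ℕ) (hk : 2 ≤ k)
    (hex : ∃ n, ∃ G : Fin n → Fin n → Prop, Oriented n G ∧ HasS n k G) :
    ∃ c n₀ : ℕ, ∀ n : ℕ, n₀ ≤ n → Fdir n k = deltaMin k * n + c := by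
  classical
  have hk1 : 1 ≤ k := by omega
  -- the defining set of δ is nonempty; extract a witness graph with a vertex of indegree δ
  have hne : {d | 0 < d ∧ ∃ n, ∃ G : Fin n → Fin n → Prop,
      Oriented n G ∧ HasS n k G ∧ ∃ v, (InNbrs n G v).ncard = d}.Nonempty := by
    obtain ⟨n, G, hG, hS⟩ := hex
    have hn : 0 < n := by have := hS.1; omega
    refine ⟨(InNbrs n G ⟨0, hn⟩).ncard, indeg_pos n k G hS hk1 _, n, G, hG, hS, _, rfl⟩
  have hmem : 0 < deltaMin k ∧ ∃ n, ∃ G : Fin n → Fin n → Prop,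
      Oriented n G ∧ HasS n k G ∧ ∃ v, (InNbrs n G v).ncard = deltaMin k :=
    Nat.sInf_mem hne
  obtain ⟨hδpos, nH, H, hH, hSH, vH, hvH⟩ := hmem
  set c₀ := EdgeCount nH H with hc₀
  -- upper bound construction by repeated cloning
  have hup : ∀ m : ℕ, ∃ G : Fin (nH + m) → Fin (nH + m) → Prop,
      Oriented (nH + m) G ∧ HasS (nH + m) k G ∧
      (∃ v, (InNbrs (nH + m) G v).ncard = deltaMin k) ∧
      EdgeCount (nH + m) G ≤ deltaMin k * (nH + m) + c₀ := by
    intro m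
    induction m with
    | zero =>
      refine ⟨H, hH, hSH, ⟨vH, hvH⟩, ?_⟩
      show EdgeCount nH H ≤ deltaMin k * nH + c₀
      omega
    | succ m ih =>
      obtain ⟨G, hG, hS, ⟨v, hv⟩, hE⟩ := ih
      obtain ⟨G', hG', hS', hlast, hE'⟩ := clone_exists (nH + m) k hk1 G hG hS v
      refine ⟨G', hG', hS', ⟨Fin.last _, ?_⟩, ?_⟩
      · show (InNbrs (nH + m + 1) G' (Fin.last (nH + m))).ncard = deltaMin k
        rw [hlast, hv]
      · show EdgeCount (nH + m + 1) G' ≤ deltaMin k * (nH + m + 1) + c₀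
        rw [hE', hv]
        have : deltaMin k * (nH + m + 1) = deltaMin k * (nH + m) + deltaMin k := by ring
        omega
  -- basic facts about Fdir for n ≥ nH
  have hFmem : ∀ n, nH ≤ n → ∃ G : Fin n → Fin n → Prop,
      Oriented n G ∧ HasS n k G ∧ EdgeCount n G = Fdir n k := by
    intro n hn
    have hne' : {m | ∃ G : Fin n → Fin n → Prop,
        Oriented n G ∧ HasS n k G ∧ EdgeCount n G = m}.Nonempty := by
      obtain ⟨j, rfl⟩ : ∃ j, n = nH + j := ⟨n - nH, by omega⟩
      obtain ⟨G, hG, hS, -, -⟩ := hup j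
      exact ⟨_, G, hG, hS, rfl⟩
    exact Nat.sInf_mem hne'
  have hFub : ∀ n, nH ≤ n → Fdir n k ≤ deltaMin k * n + c₀ := by
    intro n hn
    obtain ⟨j, rfl⟩ : ∃ j, n = nH + j := ⟨n - nH, by omega⟩
    obtain ⟨G, hG, hS, -, hE⟩ := hup j
    exact le_trans (Nat.sInf_le ⟨G, hG, hS, rfl⟩) hE
  have hFlb : ∀ n, nH ≤ n → deltaMin k * n ≤ Fdir n k := by
    intro n hn
    obtain ⟨G, hG, hS, hE⟩ := hFmem n hn
    rw [← hE]
    exact edgeCount_lower n k hk1 G hG hS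
  -- the key step: for large n, Fdir (n+1) ≤ Fdir n + δ
  have hstep : ∀ n, nH ≤ n → c₀ < n → Fdir (n+1) k ≤ Fdir n k + deltaMin k := by
    intro n hn hc
    obtain ⟨G, hG, hS, hE⟩ := hFmem n hn
    have hvex : ∃ v : Fin n, (InNbrs n G v).ncard = deltaMin k := by
      by_contra hcon
      push_neg at hcon
      have hall : ∀ v : Fin n, deltaMin k + 1 ≤ (InNbrs n G v).ncard := by
        intro v
        have h1 := deltaMin_le_indeg k n hk1 G hG hS v
        rcases Nat.lt_or_ge (deltaMin k) ((InNbrs n G v).ncard) with h | h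
        · omega
        · exact absurd (le_antisymm h h1) (hcon v)
      have hsum : (deltaMin k + 1) * n ≤ EdgeCount n G := by
        rw [edgeCount_eq_sum]
        calc (deltaMin k + 1) * n = ∑ _v : Fin n, (deltaMin k + 1) := by
              simp [Finset.sum_const, Nat.mul_comm]
          _ ≤ ∑ v : Fin n, (InNbrs n G v).ncard :=
              Finset.sum_le_sum (fun v _ => hall v)
      have hub := hFub n hn
      have : (deltaMin k + 1) * n = deltaMin k * n + n := by ring
      omega
    obtain ⟨v, hv⟩ := hvex
    obtain ⟨G', hG', hS', -, hE'⟩ := clone_exists n k hk1 G hG hS v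
    have h6 : Fdir (n+1) k ≤ EdgeCount (n+1) G' := Nat.sInf_le ⟨G', hG', hS', rfl⟩
    rw [hE', hv, hE] at h6
    exact h6
  -- the stabilizing sequence
  set N := max nH (c₀ + 1) with hN
  have hf : ∀ j, Fdir (N + (j+1)) k - deltaMin k * (N + (j+1))
      ≤ Fdir (N + j) k - deltaMin k * (N + j) := by
    intro j
    have h1 : Fdir (N + (j+1)) k ≤ Fdir (N + j) k + deltaMin k :=
      hstep (N + j) (by omega) (by omega)
    have h2 := hFlb (N + j) (by omega)
    have h3 : deltaMin k * (N + (j+1)) ≤ Fdir (N + (j+1)) k :=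
      hFlb (N + j + 1) (by omega)
    have h4 : deltaMin k * (N + (j+1)) = deltaMin k * (N + j) + deltaMin k := by ring
    omega
  obtain ⟨m, hm⟩ := anti_eventually_const
    (fun j => Fdir (N + j) k - deltaMin k * (N + j)) hf
  refine ⟨Fdir (N + m) k - deltaMin k * (N + m), N + m, fun n hn => ?_⟩
  obtain ⟨j, rfl⟩ : ∃ j, n = N + j := ⟨n - N, by omega⟩
  have h1 : Fdir (N + j) k - deltaMin k * (N + j)
      = Fdir (N + m) k - deltaMin k * (N + m) := hm j (by omega)
  have h2 := hFlb (N + j) (by omega)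
  omega


/-- If some finite oriented graph has property `S_k` (`k ≥ 2`), then there are integers
`c = c(k)` and `n₀ = n₀(k)` such that `F(n,k) = δ(k)·n + c` for all `n ≥ n₀`. -/
theorem oriented_Fnk_eventually_linear (k : ℕ) (hk : 2 ≤ k)
    (hex : ∃ n, ∃ G : Fin n → Fin n → Prop, Oriented n G ∧ HasS n k G) :
    ∃ c n₀ : ℕ, ∀ n : ℕ, n₀ ≤ n → Fdir n k = deltaMin k * n + c :=
  oriented_Fnk_eventually_linear' k hk hex
end

section
/- Let k ≥ 2 and let D be a digraph (loopless, with edges allowed in both directions between a pair of vertices) of order n ≥ k+1 that has property S_k. Then D has at least kn edges. -/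
/-- A loopless digraph of order `n ≥ k+1` with property `S_k` has at least `k·n` edges. -/
theorem digraph_Sk_edge_lower_bound (n k : ℕ) (hk : 2 ≤ k) (hn : k + 1 ≤ n)
    (G : Fin n → Fin n → Prop) (hloop : Loopless n G) (hS : HasS n k G) :
    k * n ≤ EdgeCount n G := by
  classical
  -- indegree of each vertex is at least k
  have hdeg : ∀ v : Fin n, k ≤ (Finset.univ.filter fun u => G u v).card := by
    intro v
    by_contra hlt
    push_neg at hlt
    set I : Finset (Fin n) := Finset.univ.filter fun u => G u v with hI
    have hvI : v ∉ I := by simp [hI, hloop v]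
    have hcard : (insert v I).card ≤ k := by
      rw [Finset.card_insert_of_notMem hvI]; omega
    obtain ⟨B, hsub, -, hBcard⟩ := Finset.exists_subsuperset_card_eq
      (Finset.subset_univ (insert v I)) hcard (by simp; omega)
    obtain ⟨u, hu⟩ := hS.2 B hBcard
    have hGuv : G u v := hu v (hsub (Finset.mem_insert_self v I))
    have huB : u ∈ B := hsub (Finset.mem_insert_of_mem (by simp [hI, hGuv]))
    exact hloop u (hu u huB)
  -- rewrite edge count as a finset cardinality
  have hE : EdgeCount n G
      = (Finset.univ.filter fun p : Fin n × Fin n => G p.1 p.2).card := by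
    rw [EdgeCount, ← Set.ncard_coe_finset]
    congr 1
    ext p
    simp
  rw [hE]
  have hsum : (Finset.univ.filter fun p : Fin n × Fin n => G p.1 p.2).card
      = ∑ v : Fin n, (Finset.univ.filter fun u => G u v).card := by
    rw [Finset.card_eq_sum_card_fiberwise
      (f := Prod.snd) (t := Finset.univ) (fun x _ => Finset.mem_univ _)]
    refine Finset.sum_congr rfl fun v _ => ?_
    refine Finset.card_bij (fun p _ => p.1) ?_ ?_ ?_
    · intro p hp
      simp only [Finset.mem_filter, Finset.mem_univ, true_and] at hp ⊢
      rw [hp.2] at hp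
      exact hp.1
    · intro p hp q hq hpq
      simp only [Finset.mem_filter] at hp hq
      exact Prod.ext hpq (hp.2.trans hq.2.symm)
    · intro u hu
      simp only [Finset.mem_filter, Finset.mem_univ, true_and] at hu
      exact ⟨(u, v), by simp [hu], rfl⟩
  rw [hsum]
  calc k * n = ∑ _v : Fin n, k := by simp [mul_comm]
    _ ≤ _ := Finset.sum_le_sum fun v _ => hdeg v
end

section
/- Let k ≥ 2 and let D be a digraph (loopless, with edges allowed in both directions between a pair of vertices) of order n ≥ k+1 that has property S_k and has exactly kn edges. Then D is isomorphic to an element of 𝒜(n,k); that is, there is a (k+1)-set A of vertices such that: every ordered pair of distinct vertices of A is an edge; every vertex outside A has exactly k inneighbours, all lying in A; and D has no other edges (in particular, vertices outside A have no outedges). -/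
/-- A loopless digraph of order `n ≥ k+1` with property `S_k` and exactly `k·n` edges is
isomorphic to an element of `𝒜(n,k)`: there is a `(k+1)`-set `A` spanning a complete
digraph, every vertex outside `A` has exactly `k` inneighbours, all in `A`, and there
are no other edges. -/
theorem digraph_Sk_extremal (n k : ℕ) (hk : 2 ≤ k) (hn : k + 1 ≤ n)
    (G : Fin n → Fin n → Prop) (hloop : Loopless n G) (hS : HasS n k G)
    (hcard : EdgeCount n G = k * n) :
    ∃ A : Finset (Fin n), A.card = k + 1 ∧
      (∀ a ∈ A, ∀ b ∈ A, a ≠ b → G a b) ∧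
      (∀ x, x ∉ A → (InNbrs n G x).ncard = k ∧ ∀ u, G u x → u ∈ A) ∧
      (∀ x, x ∉ A → ∀ y, ¬ G x y) := by
  classical
  set N : Fin n → Finset (Fin n) := fun v => Finset.univ.filter (fun u => G u v) with hNdef
  have hmemN : ∀ u v, u ∈ N v ↔ G u v := by intro u v; simp [hNdef]
  have hvN : ∀ v, v ∉ N v := fun v hv => hloop v ((hmemN v v).1 hv)
  have hkn : k ≤ n := by omega
  -- common inneighbour for any ≤ k vertices
  have hcommon : ∀ B : Finset (Fin n), B.card ≤ k → ∃ u, ∀ v ∈ B, u ∈ N v := by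
    intro B hB
    obtain ⟨C, hBC, hCcard⟩ := Finset.exists_superset_card_eq hB
      (by simpa [Fintype.card_fin] using hkn)
    obtain ⟨u, hu⟩ := hS.2 C hCcard
    exact ⟨u, fun v hv => (hmemN u v).2 (hu v (hBC hv))⟩
  -- every indegree ≥ k
  have hdeg_ge : ∀ v, k ≤ (N v).card := by
    intro v
    by_contra h
    push_neg at h
    have h1 : (insert v (N v)).card ≤ k := by
      have := Finset.card_insert_le v (N v); omega
    obtain ⟨B, hsub, hBcard⟩ := Finset.exists_superset_card_eq h1
      (by simpa [Fintype.card_fin] using hkn)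
    obtain ⟨u, hu⟩ := hS.2 B hBcard
    have huv : u ∈ N v := (hmemN u v).2 (hu v (hsub (Finset.mem_insert_self _ _)))
    exact hloop u (hu u (hsub (Finset.mem_insert_of_mem huv)))
  -- edge count as sum of indegrees
  have hsum : ∑ v : Fin n, (N v).card = k * n := by
    rw [← hcard]
    have hset : {p : Fin n × Fin n | G p.1 p.2}
        = ↑(Finset.univ.filter fun p : Fin n × Fin n => G p.1 p.2) := by
      ext p; simp
    rw [EdgeCount, hset, Set.ncard_coe_finset]
    rw [Finset.card_eq_sum_card_fiberwise
      (f := Prod.snd) (t := Finset.univ) (fun x _ => Finset.mem_univ x.2)]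
    refine Finset.sum_congr rfl fun v _ => ?_
    refine Finset.card_bij' (fun u _ => (u, v)) (fun p _ => p.1) ?_ ?_ ?_ ?_
    · intro u hu
      simp only [Finset.mem_filter, Finset.mem_univ, true_and]
      exact ⟨(hmemN u v).1 hu, trivial⟩
    · intro p hp
      simp only [Finset.mem_filter, Finset.mem_univ, true_and] at hp
      simp only [hNdef, Finset.mem_filter, Finset.mem_univ, true_and]
      rw [← hp.2]; exact hp.1
    · intro u hu; rfl
    · intro q hq
      simp only [Finset.mem_filter, Finset.mem_univ, true_and] at hq
      exact Prod.ext rfl hq.2.symm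
  -- every indegree = k
  have hdeg : ∀ v, (N v).card = k := by
    by_contra h
    push_neg at h
    obtain ⟨v, hv⟩ := h
    have hlt : k < (N v).card := lt_of_le_of_ne (hdeg_ge v) (Ne.symm hv)
    have := Finset.sum_lt_sum (fun i (_ : i ∈ Finset.univ) => hdeg_ge i)
      ⟨v, Finset.mem_univ v, hlt⟩
    rw [hsum, Finset.sum_const, Finset.card_univ, Fintype.card_fin, smul_eq_mul,
      Nat.mul_comm] at this
    exact lt_irrefl _ this
  -- minimal family with no common inneighbour
  have hQuniv : ¬ ∃ u, ∀ j ∈ (Finset.univ : Finset (Fin n)), u ∈ N j := by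
    rintro ⟨u, hu⟩; exact hvN u (hu u (Finset.mem_univ u))
  set M : Set ℕ := {m | ∃ S : Finset (Fin n), S.card = m ∧ ¬ ∃ u, ∀ j ∈ S, u ∈ N j}
    with hMdef
  have hMne : M.Nonempty := ⟨(Finset.univ : Finset (Fin n)).card, Finset.univ, rfl, hQuniv⟩
  obtain ⟨S, hScard, hSQ⟩ := Nat.sInf_mem hMne
  have hmin : ∀ S' : Finset (Fin n), (¬ ∃ u, ∀ j ∈ S', u ∈ N j) → sInf M ≤ S'.card :=
    fun S' h => Nat.sInf_le ⟨S', rfl, h⟩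
  have hSk : k + 1 ≤ S.card := by
    by_contra h
    push_neg at h
    exact hSQ (hcommon S (by omega))
  -- the points p j
  have hchoice : ∀ j : Fin n, ∃ x, j ∈ S → ∀ i ∈ S.erase j, x ∈ N i := by
    intro j
    by_cases hj : j ∈ S
    · have hcard' : (S.erase j).card < S.card := Finset.card_erase_lt_of_mem hj
      have h2 : ¬ ¬ ∃ u, ∀ i ∈ S.erase j, u ∈ N i := by
        intro h
        have := hmin _ h
        omega
      obtain ⟨x, hx⟩ := not_not.1 h2
      exact ⟨x, fun _ => hx⟩
    · exact ⟨j, fun h => absurd h hj⟩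
  choose p hp using hchoice
  have hpin : ∀ i ∈ S, ∀ j ∈ S, i ≠ j → p i ∈ N j := by
    intro i hi j hj hij
    exact hp i hi j (Finset.mem_erase.2 ⟨hij.symm, hj⟩)
  have hpnot : ∀ j ∈ S, p j ∉ N j := by
    intro j hj hmem
    apply hSQ
    refine ⟨p j, fun i hi => ?_⟩
    by_cases hij : i = j
    · subst hij; exact hmem
    · exact hp j hj i (Finset.mem_erase.2 ⟨hij, hi⟩)
  have hpinj : ∀ i ∈ S, ∀ j ∈ S, p i = p j → i = j := by
    intro i hi j hj hij
    by_contra hne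
    exact hpnot j hj (hij ▸ hpin i hi j hj hne)
  have hT : ∀ j ∈ S, (S.erase j).image p ⊆ N j := by
    intro j hj x hx
    obtain ⟨i, hi, rfl⟩ := Finset.mem_image.1 hx
    exact hpin i (Finset.mem_of_mem_erase hi) j hj (Finset.mem_erase.1 hi).1
  have hTcard : ∀ j ∈ S, ((S.erase j).image p).card = S.card - 1 := by
    intro j hj
    rw [Finset.card_image_of_injOn
      (fun a ha b hb => hpinj a (Finset.mem_of_mem_erase ha) b (Finset.mem_of_mem_erase hb)),
      Finset.card_erase_of_mem hj]
  obtain ⟨j0, hj0⟩ := Finset.card_pos.1 (show 0 < S.card by omega)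
  have hcle : S.card - 1 ≤ k := by
    have := Finset.card_le_card (hT j0 hj0)
    rw [hTcard j0 hj0, hdeg j0] at this
    exact this
  have hScard' : S.card = k + 1 := by omega
  have hNj : ∀ j ∈ S, N j = (S.erase j).image p := by
    intro j hj
    refine (Finset.eq_of_subset_of_card_le (hT j hj) ?_).symm
    rw [hTcard j hj, hdeg j, hScard']
    omega
  set P : Finset (Fin n) := S.image p with hPdef
  have hPcard : P.card = k + 1 := by
    rw [hPdef, Finset.card_image_of_injOn (fun a ha b hb => hpinj a ha b hb), hScard']
  have hPerase : ∀ j ∈ S, N j = P.erase (p j) := by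
    intro j hj
    rw [hNj j hj]
    ext x
    constructor
    · intro hx
      obtain ⟨i, hi, rfl⟩ := Finset.mem_image.1 hx
      obtain ⟨hij, hiS⟩ := Finset.mem_erase.1 hi
      exact Finset.mem_erase.2
        ⟨fun h => hij (hpinj i hiS j hj h), Finset.mem_image_of_mem p hiS⟩
    · intro hx
      obtain ⟨hxne, hxP⟩ := Finset.mem_erase.1 hx
      obtain ⟨i, hiS, rfl⟩ := Finset.mem_image.1 hxP
      exact Finset.mem_image.2 ⟨i, Finset.mem_erase.2 ⟨fun h => hxne (by rw [h]), hiS⟩, rfl⟩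
  -- every inneighbourhood is inside P
  have hNP : ∀ v, N v ⊆ P := by
    intro v
    have hsub : ∀ x ∈ P \ N v, ∀ y ∈ P \ N v, x = y := by
      intro x hx y hy
      obtain ⟨i, hiS, rfl⟩ := Finset.mem_image.1 (Finset.mem_sdiff.1 hx).1
      obtain ⟨i', hi'S, rfl⟩ := Finset.mem_image.1 (Finset.mem_sdiff.1 hy).1
      by_contra hne
      have hii' : i ≠ i' := fun h => hne (by rw [h])
      have hereq : ((S.erase i).erase i').card = k - 1 := by
        rw [Finset.card_erase_of_mem (Finset.mem_erase.2 ⟨hii'.symm, hi'S⟩),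
          Finset.card_erase_of_mem hiS, hScard']
        omega
      have hUcard : (insert v ((S.erase i).erase i')).card ≤ k := by
        have := Finset.card_insert_le v ((S.erase i).erase i')
        omega
      obtain ⟨u, hu⟩ := hcommon _ hUcard
      have huv : u ∈ N v := hu v (Finset.mem_insert_self _ _)
      obtain ⟨j, hjmem⟩ := Finset.card_pos.1
        (show 0 < ((S.erase i).erase i').card by omega)
      have hjS : j ∈ S := Finset.mem_of_mem_erase (Finset.mem_of_mem_erase hjmem)
      have huj : u ∈ N j := hu j (Finset.mem_insert_of_mem hjmem)
      have huP : u ∈ P := by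
        rw [hPerase j hjS] at huj
        exact Finset.mem_of_mem_erase huj
      obtain ⟨l, hlS, rfl⟩ := Finset.mem_image.1 huP
      have hl2 : l = i ∨ l = i' := by
        by_contra hl
        push_neg at hl
        have hlmem : l ∈ (S.erase i).erase i' :=
          Finset.mem_erase.2 ⟨hl.2, Finset.mem_erase.2 ⟨hl.1, hlS⟩⟩
        exact hpnot l hlS (hu l (Finset.mem_insert_of_mem hlmem))
      rcases hl2 with rfl | rfl
      · exact (Finset.mem_sdiff.1 hx).2 huv
      · exact (Finset.mem_sdiff.1 hy).2 huv
    have h1 : (P \ N v).card ≤ 1 := Finset.card_le_one.2 hsub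
    have h0 := Finset.card_sdiff_add_card_inter P (N v)
    have h2 : k ≤ (P ∩ N v).card := by omega
    have h3 : P ∩ N v = N v :=
      Finset.eq_of_subset_of_card_le Finset.inter_subset_right (by rw [hdeg v]; exact h2)
    intro x hx
    exact Finset.inter_subset_left (h3 ▸ hx)
  -- conclusion
  refine ⟨P, hPcard, ?_, ?_, ?_⟩
  · intro a ha b hb hab
    have h1 : N b ⊆ P.erase b := fun x hx =>
      Finset.mem_erase.2 ⟨fun h => hvN b (h ▸ hx), hNP b hx⟩
    have h2 : N b = P.erase b :=
      Finset.eq_of_subset_of_card_le h1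
        (by rw [Finset.card_erase_of_mem hb, hPcard, hdeg b]; omega)
    have : a ∈ N b := by rw [h2]; exact Finset.mem_erase.2 ⟨hab, ha⟩
    exact (hmemN a b).1 this
  · intro x hx
    constructor
    · have hset : InNbrs n G x = ↑(N x) := by ext u; simp [InNbrs, hNdef]
      rw [hset, Set.ncard_coe_finset, hdeg x]
    · intro u hux
      exact hNP x ((hmemN u x).2 hux)
  · intro x hx y hxy
    exact hx (hNP y ((hmemN x y).2 hxy))
end

section
/- Let k ≥ 2 and n ≥ k+1. Every digraph G in the family 𝒜(n,k) has property S_k: for every k-set B of vertices of G there is a vertex u ∈ {1,…,k+1} \ B such that every element of B is an outneighbour of u. -/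
/-- Every digraph in the family `𝒜(n,k)` has property `S_k`: every `k`-set `B` of
vertices is covered by some vertex `u` of `{0,…,k} \\ B`. -/
theorem A_family_has_Sk (n k : ℕ) (hk : 2 ≤ k) (hn : k + 1 ≤ n)
    (G : Fin n → Fin n → Prop) (hG : InA n k G) :
    ∀ B : Finset (Fin n), B.card = k →
      ∃ u : Fin n, (u : ℕ) < k + 1 ∧ u ∉ B ∧ ∀ v ∈ B, G u v := by
  classical
  intro B hB
  set S : Finset (Fin n) := Finset.univ.filter (fun u => (u : ℕ) < k + 1) with hSdef
  have hScard : S.card = k + 1 := by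
    have hmap : S = (Finset.univ : Finset (Fin (k+1))).map
        ⟨Fin.castLE hn, Fin.castLE_injective hn⟩ := by
      ext u
      simp only [hSdef, Finset.mem_filter, Finset.mem_univ, true_and, Finset.mem_map,
        Function.Embedding.coeFn_mk]
      constructor
      · intro h
        exact ⟨⟨(u : ℕ), h⟩, by ext; rfl⟩
      · rintro ⟨i, rfl⟩
        exact i.isLt
    rw [hmap]
    simp
  -- uniqueness of a failing vertex
  have huniq : ∀ x ∈ B, ∀ u u' : Fin n, (u : ℕ) < k + 1 → (u' : ℕ) < k + 1 →
      ¬ G u x → ¬ G u' x → u = u' := by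
    intro x _ u u' hu hu' hgu hgu'
    by_cases hxk : (x : ℕ) < k + 1
    · have h1 := hG.1 u x hu hxk
      have h2 := hG.1 u' x hu' hxk
      have e1 : u = x := by by_contra h; exact hgu (h1.mpr h)
      have e2 : u' = x := by by_contra h; exact hgu' (h2.mpr h)
      rw [e1, e2]
    · push_neg at hxk
      obtain ⟨hcard, hsub⟩ := hG.2.1 x hxk
      set I := InNbrs n G x with hI
      set T : Set (Fin n) := {u : Fin n | (u : ℕ) < k + 1} with hT
      have hIT : I ⊆ T := fun w hw => hsub w hw
      have hTS : T = ↑S := by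
        ext w; simp [hT, hSdef]
      have hTcard : T.ncard = k + 1 := by
        rw [hTS, Set.ncard_coe_finset, hScard]
      have hdiff : (T \ I).ncard = 1 := by
        rw [Set.ncard_diff hIT, hcard, hTcard]; omega
      obtain ⟨a, ha⟩ := Set.ncard_eq_one.mp hdiff
      have m1 : u ∈ T \ I := ⟨hu, hgu⟩
      have m2 : u' ∈ T \ I := ⟨hu', hgu'⟩
      rw [ha, Set.mem_singleton_iff] at m1 m2
      rw [m1, m2]
  set Bad : Finset (Fin n) := S.filter (fun u => ∃ x ∈ B, ¬ G u x) with hBad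
  have hf : ∀ u : Fin n, ∃ x, u ∈ Bad → x ∈ B ∧ ¬ G u x := by
    intro u
    by_cases h : u ∈ Bad
    · obtain ⟨x, hx1, hx2⟩ := (Finset.mem_filter.mp h).2
      exact ⟨x, fun _ => ⟨hx1, hx2⟩⟩
    · exact ⟨u, fun h' => absurd h' h⟩
  choose f hfp using hf
  have hmemS : ∀ u ∈ Bad, (u : ℕ) < k + 1 := by
    intro u hu
    exact (Finset.mem_filter.mp ((Finset.mem_filter.mp hu).1)).2
  have hBadcard : Bad.card ≤ k := by
    have hle := Finset.card_le_card_of_injOn f (fun u hu => (hfp u hu).1)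
      (by
        intro u hu u' hu' heq
        obtain ⟨hx1, hx2⟩ := hfp u hu
        obtain ⟨hy1, hy2⟩ := hfp u' hu'
        rw [heq] at hx2
        exact huniq (f u') hy1 u u' (hmemS u hu) (hmemS u' hu') hx2 hy2)
    omega
  have hnot : ¬ S ⊆ Bad := by
    intro h
    have := Finset.card_le_card h
    omega
  obtain ⟨u, huS, huBad⟩ := Finset.not_subset.mp hnot
  have huk : (u : ℕ) < k + 1 := (Finset.mem_filter.mp huS).2
  have hgood : ∀ v ∈ B, G u v := by
    intro v hv
    by_contra h
    exact huBad (Finset.mem_filter.mpr ⟨huS, v, hv, h⟩)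
  refine ⟨u, huk, ?_, hgood⟩
  intro huB
  have := hgood u huB
  exact (hG.1 u u huk huk).mp this rfl
end

section
/- Let k ≥ 2 and let D be a digraph (loopless) of order n ≥ k+1 with property S_k in which every vertex has indegree exactly k. Then for every vertex v of D, the inneighbourhood Γ⁻(v) induces a complete digraph: for every ordered pair (w, w′) of distinct vertices in Γ⁻(v), the edge from w to w′ is present in D. -/
/-- In a loopless digraph of order `n ≥ k+1` with property `S_k` in which every vertex
has indegree exactly `k`, every inneighbourhood induces a complete digraph. -/
theorem inneighbourhood_complete (n k : ℕ) (hk : 2 ≤ k) (hn : k + 1 ≤ n)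
    (G : Fin n → Fin n → Prop) (hloop : Loopless n G) (hS : HasS n k G)
    (hdeg : ∀ v, (InNbrs n G v).ncard = k) :
    ∀ v w w', G w v → G w' v → w ≠ w' → G w w' := by
  classical
  intro v w w' hw hw' hne
  obtain ⟨-, hSk⟩ := hS
  set S := (InNbrs n G v).toFinset with hSdef
  have hScard : S.card = k := by
    rw [← Set.ncard_eq_toFinset_card']; exact hdeg v
  have hwS : w ∈ S := Set.mem_toFinset.mpr hw
  have hw'S : w' ∈ S := Set.mem_toFinset.mpr hw'
  have hvS : v ∉ S := by
    simp only [hSdef, Set.mem_toFinset]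
    exact hloop v
  have hcard : (insert v (S.erase w)).card = k := by
    rw [Finset.card_insert_of_notMem (fun h => hvS (Finset.mem_of_mem_erase h)),
      Finset.card_erase_of_mem hwS, hScard]
    omega
  obtain ⟨u, hu⟩ := hSk _ hcard
  have huv : G u v := hu v (Finset.mem_insert_self _ _)
  have huS : u ∈ S := Set.mem_toFinset.mpr huv
  have huw : u = w := by
    by_contra h
    exact hloop u (hu u (Finset.mem_insert_of_mem (Finset.mem_erase.mpr ⟨h, huS⟩)))
  subst huw
  exact hu w' (Finset.mem_insert_of_mem (Finset.mem_erase.mpr ⟨hne.symm, hw'S⟩))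
end
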